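/- Let P be the transition matrix of a reversible ergodic Markov chain on a finite state space with stationary measure μ, realized as single-edge adjacent-transposition updates on S_n restricted to positions [N]. Let B_1, …, B_m ⊆ [N] be blocks whose edge sets cover all edges of [N], let χ = max_{j∈[N]} #{i : j ∈ B_i}, and let P_B be the heat-bath block dynamics that picks block B_i with probability |B_i|/∑_j|B_j| and resamples the configuration on B_i from μ conditioned on the configuration outside B_i. Then the spectral gaps satisfy gap(P) ≥ χ^{-1} · gap(P_B) · min_{i, η} gap(P restricted to B_i with boundary condition η). -/

import Mathlib

open Finset
open scoped Classical

noncomputable section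

/-- The unnormalized weight `∏_{i<j} p(σ(i), σ(j))` of a permutation. -/
def pairWeight (N : ℕ) (p : Fin N → Fin N → ℝ) (σ : Equiv.Perm (Fin N)) : ℝ :=
  ∏ x ∈ Finset.univ.filter (fun x : Fin N × Fin N => x.1 < x.2), p (σ x.1) (σ x.2)

/-- The normalized stationary measure `μ`. -/
def muN (N : ℕ) (p : Fin N → Fin N → ℝ) (σ : Equiv.Perm (Fin N)) : ℝ :=
  pairWeight N p σ / ∑ τ : Equiv.Perm (Fin N), pairWeight N p τ

/-- Successor position (`v+1` when it exists, else `v` itself, which makes the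
corresponding swap trivial). -/
def nxt (N : ℕ) (v : Fin N) : Fin N :=
  if h : (v : ℕ) + 1 < N then ⟨(v : ℕ) + 1, h⟩ else v

/-- Variance of `f` under `μ`. -/
def varMu (N : ℕ) (p : Fin N → Fin N → ℝ) (f : Equiv.Perm (Fin N) → ℝ) : ℝ :=
  ∑ σ : Equiv.Perm (Fin N),
    muN N p σ * (f σ - ∑ τ : Equiv.Perm (Fin N), muN N p τ * f τ) ^ 2

/-- Dirichlet form of the single-edge adjacent transposition chain on `[N]`. -/
def dirichletSingle (N : ℕ) (p : Fin N → Fin N → ℝ) (f : Equiv.Perm (Fin N) → ℝ) : ℝ :=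
  (1 / 2) * ∑ σ : Equiv.Perm (Fin N), muN N p σ *
    ∑ v : Fin N, (1 / (N : ℝ)) * p (σ (nxt N v)) (σ v) *
      (f ((Equiv.swap v (nxt N v)).trans σ) - f σ) ^ 2

/-- Two configurations agree outside the block `B`. -/
def agreeOff (N : ℕ) (B : Finset (Fin N)) (σ σ' : Equiv.Perm (Fin N)) : Prop :=
  ∀ x ∉ B, σ x = σ' x

/-- Heat-bath conditional measure on the block `B` given the configuration `η`
outside of `B`. -/
def condMu (N : ℕ) (p : Fin N → Fin N → ℝ) (B : Finset (Fin N))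
    (η σ : Equiv.Perm (Fin N)) : ℝ :=
  if agreeOff N B η σ then
    muN N p σ /
      ∑ τ ∈ Finset.univ.filter (fun τ : Equiv.Perm (Fin N) => agreeOff N B η τ), muN N p τ
  else 0

/-- Transition kernel of the heat-bath block dynamics: pick block `B i` with
probability `|B i| / ∑ j |B j|` and resample it from `μ` conditioned outside. -/
def blockKernel (N m : ℕ) (p : Fin N → Fin N → ℝ) (B : Fin m → Finset (Fin N))
    (σ σ' : Equiv.Perm (Fin N)) : ℝ :=
  ∑ i : Fin m, (((B i).card : ℝ) / ∑ j : Fin m, ((B j).card : ℝ)) * condMu N p (B i) σ σ'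

/-- Dirichlet form of the block dynamics. -/
def dirichletBlock (N m : ℕ) (p : Fin N → Fin N → ℝ) (B : Fin m → Finset (Fin N))
    (f : Equiv.Perm (Fin N) → ℝ) : ℝ :=
  (1 / 2) * ∑ σ : Equiv.Perm (Fin N), ∑ σ' : Equiv.Perm (Fin N),
    muN N p σ * blockKernel N m p B σ σ' * (f σ - f σ') ^ 2

/-- Variance of `f` under the conditional measure on block `B` with boundary `η`. -/
def condVar (N : ℕ) (p : Fin N → Fin N → ℝ) (B : Finset (Fin N))
    (η : Equiv.Perm (Fin N)) (f : Equiv.Perm (Fin N) → ℝ) : ℝ :=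
  ∑ σ : Equiv.Perm (Fin N),
    condMu N p B η σ * (f σ - ∑ τ : Equiv.Perm (Fin N), condMu N p B η τ * f τ) ^ 2

/-- Dirichlet form of the adjacent transposition chain restricted to the block `B`
with boundary condition `η` (only edges inside `B` are updated). -/
def dirichletRestricted (N : ℕ) (p : Fin N → Fin N → ℝ) (B : Finset (Fin N))
    (η : Equiv.Perm (Fin N)) (f : Equiv.Perm (Fin N) → ℝ) : ℝ :=
  (1 / 2) * ∑ σ : Equiv.Perm (Fin N), condMu N p B η σ *
    ∑ v ∈ Finset.univ.filter
        (fun v : Fin N => v ∈ B ∧ nxt N v ∈ B ∧ nxt N v ≠ v),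
      (1 / (B.card : ℝ)) * p (σ (nxt N v)) (σ v) *
        (f ((Equiv.swap v (nxt N v)).trans σ) - f σ) ^ 2

section Aux

variable {N : ℕ} {p : Fin N → Fin N → ℝ}

lemma pairWeight_pos (hp : ∀ i j, 0 < p i j) (σ : Equiv.Perm (Fin N)) :
    0 < pairWeight N p σ :=
  Finset.prod_pos fun _ _ => hp _ _

lemma muN_pos (hp : ∀ i j, 0 < p i j) (σ : Equiv.Perm (Fin N)) : 0 < muN N p σ :=
  div_pos (pairWeight_pos hp σ)
    (Finset.sum_pos (fun τ _ => pairWeight_pos hp τ) Finset.univ_nonempty)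

lemma agree_refl (B : Finset (Fin N)) (σ : Equiv.Perm (Fin N)) : agreeOff N B σ σ :=
  fun _ _ => rfl

lemma agree_symm {B : Finset (Fin N)} {σ τ : Equiv.Perm (Fin N)}
    (h : agreeOff N B σ τ) : agreeOff N B τ σ := fun x hx => (h x hx).symm

lemma agree_trans {B : Finset (Fin N)} {σ τ ρ : Equiv.Perm (Fin N)}
    (h1 : agreeOff N B σ τ) (h2 : agreeOff N B τ ρ) : agreeOff N B σ ρ :=
  fun x hx => (h1 x hx).trans (h2 x hx)

/-- Normalizing constant of the conditional measure. -/
def Zb (N : ℕ) (p : Fin N → Fin N → ℝ) (B : Finset (Fin N)) (η : Equiv.Perm (Fin N)) : ℝ :=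
  ∑ τ ∈ Finset.univ.filter (fun τ : Equiv.Perm (Fin N) => agreeOff N B η τ), muN N p τ

lemma Zb_pos (hp : ∀ i j, 0 < p i j) (B : Finset (Fin N)) (η : Equiv.Perm (Fin N)) :
    0 < Zb N p B η :=
  Finset.sum_pos (fun τ _ => muN_pos hp τ)
    ⟨η, Finset.mem_filter.2 ⟨Finset.mem_univ _, agree_refl B η⟩⟩

lemma condMu_eq (B : Finset (Fin N)) (η σ : Equiv.Perm (Fin N)) :
    condMu N p B η σ = if agreeOff N B η σ then muN N p σ / Zb N p B η else 0 := rfl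

lemma filter_agree_congr {B : Finset (Fin N)} {η η' : Equiv.Perm (Fin N)}
    (h : agreeOff N B η η') :
    (Finset.univ.filter (fun τ : Equiv.Perm (Fin N) => agreeOff N B η τ)) =
      Finset.univ.filter (fun τ : Equiv.Perm (Fin N) => agreeOff N B η' τ) := by
  ext τ
  simp only [Finset.mem_filter, Finset.mem_univ, true_and]
  exact ⟨fun h2 => agree_trans (agree_symm h) h2, fun h2 => agree_trans h h2⟩

lemma Zb_congr {B : Finset (Fin N)} {η η' : Equiv.Perm (Fin N)} (h : agreeOff N B η η') :
    Zb N p B η = Zb N p B η' := by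
  rw [Zb, Zb, filter_agree_congr h]

lemma condMu_congr {B : Finset (Fin N)} {η η' : Equiv.Perm (Fin N)} (h : agreeOff N B η η') :
    condMu N p B η = condMu N p B η' := by
  funext σ
  rw [condMu_eq, condMu_eq, Zb_congr h]
  by_cases h2 : agreeOff N B η σ
  · rw [if_pos h2, if_pos (agree_trans (agree_symm h) h2)]
  · rw [if_neg h2, if_neg (fun h3 => h2 (agree_trans h h3))]

lemma agree_of_condMu_ne_zero {B : Finset (Fin N)} {η σ : Equiv.Perm (Fin N)}
    (h : condMu N p B η σ ≠ 0) : agreeOff N B η σ := by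
  by_contra h2
  exact h (by rw [condMu_eq, if_neg h2])

lemma condMu_nonneg (hp : ∀ i j, 0 < p i j) (B : Finset (Fin N)) (η σ : Equiv.Perm (Fin N)) :
    0 ≤ condMu N p B η σ := by
  rw [condMu_eq]
  split
  · exact div_nonneg (muN_pos hp σ).le (Zb_pos hp B η).le
  · exact le_refl 0

lemma sum_condMu (hp : ∀ i j, 0 < p i j) (B : Finset (Fin N)) (η : Equiv.Perm (Fin N)) :
    ∑ τ : Equiv.Perm (Fin N), condMu N p B η τ = 1 := by
  have h1 : ∑ τ : Equiv.Perm (Fin N), condMu N p B η τ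
      = ∑ τ ∈ Finset.univ.filter (fun τ : Equiv.Perm (Fin N) => agreeOff N B η τ),
          muN N p τ / Zb N p B η := by
    rw [Finset.sum_filter]
    exact Finset.sum_congr rfl fun τ _ => condMu_eq B η τ
  rw [h1, ← Finset.sum_div]
  exact div_self (Zb_pos hp B η).ne'

lemma tower (hp : ∀ i j, 0 < p i j) (B : Finset (Fin N)) (τ : Equiv.Perm (Fin N)) :
    ∑ σ : Equiv.Perm (Fin N), muN N p σ * condMu N p B σ τ = muN N p τ := by
  have h1 : ∀ σ : Equiv.Perm (Fin N), muN N p σ * condMu N p B σ τ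
      = if agreeOff N B τ σ then muN N p σ * (muN N p τ / Zb N p B τ) else 0 := by
    intro σ
    rw [condMu_eq]
    by_cases h : agreeOff N B σ τ
    · rw [if_pos h, if_pos (agree_symm h), Zb_congr h]
    · rw [if_neg h, if_neg (fun h2 => h (agree_symm h2)), mul_zero]
  rw [Finset.sum_congr rfl fun σ _ => h1 σ, ← Finset.sum_filter, ← Finset.sum_mul]
  rw [show (∑ σ ∈ Finset.univ.filter (fun σ : Equiv.Perm (Fin N) => agreeOff N B τ σ),
      muN N p σ) = Zb N p B τ from rfl]
  rw [mul_div_assoc', mul_comm, mul_div_assoc, div_self (Zb_pos hp B τ).ne', mul_one]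

/-- Conditional mean. -/
def mB (N : ℕ) (p : Fin N → Fin N → ℝ) (B : Finset (Fin N)) (η : Equiv.Perm (Fin N))
    (f : Equiv.Perm (Fin N) → ℝ) : ℝ :=
  ∑ τ : Equiv.Perm (Fin N), condMu N p B η τ * f τ

lemma condVar_eq (B : Finset (Fin N)) (η : Equiv.Perm (Fin N)) (f : Equiv.Perm (Fin N) → ℝ) :
    condVar N p B η f = ∑ σ : Equiv.Perm (Fin N),
      condMu N p B η σ * (f σ - mB N p B η f) ^ 2 := rfl

lemma mB_congr {B : Finset (Fin N)} {η η' : Equiv.Perm (Fin N)} (h : agreeOff N B η η')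
    (f : Equiv.Perm (Fin N) → ℝ) : mB N p B η f = mB N p B η' f := by
  rw [mB, mB, condMu_congr h]

lemma expand (hp : ∀ i j, 0 < p i j) (B : Finset (Fin N)) (σ : Equiv.Perm (Fin N))
    (f : Equiv.Perm (Fin N) → ℝ) :
    ∑ τ : Equiv.Perm (Fin N), condMu N p B σ τ * (f σ - f τ) ^ 2
      = (f σ - mB N p B σ f) ^ 2 + condVar N p B σ f := by
  have h1 : ∀ τ : Equiv.Perm (Fin N), condMu N p B σ τ * (f σ - f τ) ^ 2
      = condMu N p B σ τ * (f σ - mB N p B σ f) ^ 2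
        + (2 * (f σ - mB N p B σ f)) * (condMu N p B σ τ * mB N p B σ f
            - condMu N p B σ τ * f τ)
        + condMu N p B σ τ * (f τ - mB N p B σ f) ^ 2 := by
    intro τ; ring
  rw [Finset.sum_congr rfl fun τ _ => h1 τ, Finset.sum_add_distrib, Finset.sum_add_distrib]
  have h2 : ∑ τ : Equiv.Perm (Fin N), condMu N p B σ τ * (f σ - mB N p B σ f) ^ 2
      = (f σ - mB N p B σ f) ^ 2 := by
    rw [← Finset.sum_mul, sum_condMu hp, one_mul]
  have h3 : ∑ τ : Equiv.Perm (Fin N), (2 * (f σ - mB N p B σ f))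
      * (condMu N p B σ τ * mB N p B σ f - condMu N p B σ τ * f τ) = 0 := by
    rw [← Finset.mul_sum, Finset.sum_sub_distrib, ← Finset.sum_mul, sum_condMu hp, one_mul]
    rw [show (∑ τ : Equiv.Perm (Fin N), condMu N p B σ τ * f τ) = mB N p B σ f from rfl]
    rw [sub_self, mul_zero]
  rw [h2, h3, condVar_eq, add_zero]

lemma sumA (hp : ∀ i j, 0 < p i j) (B : Finset (Fin N)) (f : Equiv.Perm (Fin N) → ℝ) :
    ∑ σ : Equiv.Perm (Fin N), muN N p σ * (f σ - mB N p B σ f) ^ 2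
      = ∑ σ : Equiv.Perm (Fin N), muN N p σ * condVar N p B σ f := by
  calc ∑ σ : Equiv.Perm (Fin N), muN N p σ * (f σ - mB N p B σ f) ^ 2
      = ∑ σ : Equiv.Perm (Fin N), ∑ ρ : Equiv.Perm (Fin N),
          muN N p ρ * condMu N p B ρ σ * (f σ - mB N p B σ f) ^ 2 := by
        refine Finset.sum_congr rfl fun σ _ => ?_
        rw [← Finset.sum_mul, tower hp B σ]
    _ = ∑ ρ : Equiv.Perm (Fin N), ∑ σ : Equiv.Perm (Fin N),
          muN N p ρ * condMu N p B ρ σ * (f σ - mB N p B ρ f) ^ 2 := by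
        rw [Finset.sum_comm]
        refine Finset.sum_congr rfl fun ρ _ => Finset.sum_congr rfl fun σ _ => ?_
        by_cases h : condMu N p B ρ σ = 0
        · rw [h, mul_zero, zero_mul, zero_mul]
        · rw [mB_congr (agree_of_condMu_ne_zero h) f]
    _ = ∑ ρ : Equiv.Perm (Fin N), muN N p ρ * condVar N p B ρ f := by
        refine Finset.sum_congr rfl fun ρ _ => ?_
        rw [condVar_eq, Finset.mul_sum]
        exact Finset.sum_congr rfl fun σ _ => by ring

lemma blockVar (hp : ∀ i j, 0 < p i j) (B : Finset (Fin N)) (f : Equiv.Perm (Fin N) → ℝ) :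
    ∑ σ : Equiv.Perm (Fin N), ∑ τ : Equiv.Perm (Fin N),
        muN N p σ * condMu N p B σ τ * (f σ - f τ) ^ 2
      = 2 * ∑ σ : Equiv.Perm (Fin N), muN N p σ * condVar N p B σ f := by
  have h1 : ∀ σ : Equiv.Perm (Fin N),
      (∑ τ : Equiv.Perm (Fin N), muN N p σ * condMu N p B σ τ * (f σ - f τ) ^ 2)
        = muN N p σ * ((f σ - mB N p B σ f) ^ 2 + condVar N p B σ f) := by
    intro σ
    rw [← expand hp B σ f, Finset.mul_sum]
    exact Finset.sum_congr rfl fun τ _ => by ring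
  rw [Finset.sum_congr rfl fun σ _ => h1 σ]
  have h2 : ∀ σ : Equiv.Perm (Fin N),
      muN N p σ * ((f σ - mB N p B σ f) ^ 2 + condVar N p B σ f)
        = muN N p σ * (f σ - mB N p B σ f) ^ 2 + muN N p σ * condVar N p B σ f := by
    intro σ; ring
  rw [Finset.sum_congr rfl fun σ _ => h2 σ, Finset.sum_add_distrib, sumA hp B f]
  ring

/-- Inner single-edge Dirichlet summand restricted to block `B`. -/
def Rin (N : ℕ) (p : Fin N → Fin N → ℝ) (B : Finset (Fin N)) (f : Equiv.Perm (Fin N) → ℝ)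
    (τ : Equiv.Perm (Fin N)) : ℝ :=
  ∑ v ∈ Finset.univ.filter
      (fun v : Fin N => v ∈ B ∧ nxt N v ∈ B ∧ nxt N v ≠ v),
    (1 / (B.card : ℝ)) * p (τ (nxt N v)) (τ v) *
      (f ((Equiv.swap v (nxt N v)).trans τ) - f τ) ^ 2

lemma dirichletRestricted_eq (B : Finset (Fin N)) (η : Equiv.Perm (Fin N))
    (f : Equiv.Perm (Fin N) → ℝ) :
    dirichletRestricted N p B η f
      = (1 / 2) * ∑ τ : Equiv.Perm (Fin N), condMu N p B η τ * Rin N p B f τ := rfl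

lemma Eblock_eq (hp : ∀ i j, 0 < p i j) {m : ℕ} (B : Fin m → Finset (Fin N))
    (f : Equiv.Perm (Fin N) → ℝ) :
    dirichletBlock N m p B f
      = ∑ i : Fin m, (((B i).card : ℝ) / ∑ j : Fin m, ((B j).card : ℝ)) *
          ∑ σ : Equiv.Perm (Fin N), muN N p σ * condVar N p (B i) σ f := by
  have h1 : ∀ σ τ : Equiv.Perm (Fin N),
      muN N p σ * blockKernel N m p B σ τ * (f σ - f τ) ^ 2
        = ∑ i : Fin m, (((B i).card : ℝ) / ∑ j : Fin m, ((B j).card : ℝ)) *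
            (muN N p σ * condMu N p (B i) σ τ * (f σ - f τ) ^ 2) := by
    intro σ τ
    rw [blockKernel, Finset.mul_sum, Finset.sum_mul]
    exact Finset.sum_congr rfl fun i _ => by ring
  rw [dirichletBlock]
  rw [Finset.sum_congr rfl fun σ _ => Finset.sum_congr rfl fun τ _ => h1 σ τ]
  rw [Finset.sum_congr rfl fun σ (_ : σ ∈ Finset.univ) => Finset.sum_comm]
  rw [Finset.sum_comm, Finset.mul_sum]
  refine Finset.sum_congr rfl fun i _ => ?_
  rw [Finset.sum_congr rfl fun σ (_ : σ ∈ Finset.univ) => (Finset.mul_sum _ _ _).symm,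
      ← Finset.mul_sum, blockVar hp (B i) f]
  ring

lemma Erest_sum (hp : ∀ i j, 0 < p i j) (B : Finset (Fin N)) (f : Equiv.Perm (Fin N) → ℝ) :
    ∑ σ : Equiv.Perm (Fin N), muN N p σ * dirichletRestricted N p B σ f
      = (1 / 2) * ∑ τ : Equiv.Perm (Fin N), muN N p τ * Rin N p B f τ := by
  have h1 : ∀ σ : Equiv.Perm (Fin N), muN N p σ * dirichletRestricted N p B σ f
      = (1 / 2) * ∑ τ : Equiv.Perm (Fin N),
          muN N p σ * condMu N p B σ τ * Rin N p B f τ := by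
    intro σ
    calc muN N p σ * dirichletRestricted N p B σ f
        = (1 / 2) * (muN N p σ * ∑ τ : Equiv.Perm (Fin N), condMu N p B σ τ * Rin N p B f τ) := by
          rw [dirichletRestricted_eq]; ring
      _ = (1 / 2) * ∑ τ : Equiv.Perm (Fin N), muN N p σ * (condMu N p B σ τ * Rin N p B f τ) := by
          rw [Finset.mul_sum]
      _ = (1 / 2) * ∑ τ : Equiv.Perm (Fin N), muN N p σ * condMu N p B σ τ * Rin N p B f τ := by
          exact congrArg _ (Finset.sum_congr rfl fun τ _ => by ring)
  rw [Finset.sum_congr rfl fun σ _ => h1 σ, ← Finset.mul_sum, Finset.sum_comm]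
  refine congrArg _ (Finset.sum_congr rfl fun τ _ => ?_)
  rw [← Finset.sum_mul, tower hp B τ]

lemma Esingle_nonneg (hp : ∀ i j, 0 < p i j) (f : Equiv.Perm (Fin N) → ℝ) :
    0 ≤ dirichletSingle N p f := by
  rw [dirichletSingle]
  apply mul_nonneg (by norm_num)
  refine Finset.sum_nonneg fun σ _ => mul_nonneg (muN_pos hp σ).le ?_
  refine Finset.sum_nonneg fun v _ => ?_
  exact mul_nonneg (mul_nonneg (by positivity) (hp _ _).le) (sq_nonneg _)

lemma covered {m : ℕ} {B : Fin m → Finset (Fin N)}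
    (hcover : ∀ v : Fin N, nxt N v ≠ v → ∃ i : Fin m, v ∈ B i ∧ nxt N v ∈ B i)
    (hN : 2 ≤ N) (v : Fin N) : ∃ i : Fin m, v ∈ B i := by
  by_cases h : (v : ℕ) + 1 < N
  · have hne : nxt N v ≠ v := by
      rw [nxt, dif_pos h]
      intro he
      have h2 := congrArg Fin.val he
      simp only at h2
      omega
    obtain ⟨i, hi, _⟩ := hcover v hne
    exact ⟨i, hi⟩
  · have hvlt := v.isLt
    have hu2 : N - 2 < N := by omega
    set u : Fin N := ⟨N - 2, hu2⟩ with hu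
    have hu1 : (u : ℕ) + 1 < N := by simp [hu]; omega
    have hnu : nxt N u = v := by
      rw [nxt, dif_pos hu1]
      apply Fin.ext
      simp [hu]
      omega
    have hne : nxt N u ≠ u := by
      rw [nxt, dif_pos hu1]
      intro he
      have h2 := congrArg Fin.val he
      simp only [hu] at h2
      omega
    obtain ⟨i, _, hi2⟩ := hcover u hne
    exact ⟨i, hnu ▸ hi2⟩

lemma S_ge {m : ℕ} {B : Fin m → Finset (Fin N)}
    (hcov : ∀ v : Fin N, ∃ i : Fin m, v ∈ B i) :
    N ≤ ∑ i : Fin m, (B i).card := by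
  have h1 : ∀ i : Fin m, (B i).card = ∑ v : Fin N, if v ∈ B i then 1 else 0 := by
    intro i
    rw [← Finset.sum_filter, Finset.sum_const, smul_eq_mul, mul_one,
      Finset.filter_univ_mem]
  rw [Finset.sum_congr rfl fun i _ => h1 i, Finset.sum_comm]
  have h2 : ∀ v : Fin N, 1 ≤ ∑ i : Fin m, if v ∈ B i then 1 else 0 := by
    intro v
    obtain ⟨i, hi⟩ := hcov v
    rw [← Finset.sum_filter, Finset.sum_const, smul_eq_mul, mul_one]
    exact Finset.card_pos.2 ⟨i, Finset.mem_filter.2 ⟨Finset.mem_univ _, hi⟩⟩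
  calc N = ∑ _v : Fin N, 1 := by rw [Finset.sum_const, smul_eq_mul, mul_one, Finset.card_univ,
        Fintype.card_fin]
    _ ≤ _ := Finset.sum_le_sum fun v _ => h2 v

/-- Single-edge energy term. -/
def tE (N : ℕ) (p : Fin N → Fin N → ℝ) (f : Equiv.Perm (Fin N) → ℝ)
    (τ : Equiv.Perm (Fin N)) (v : Fin N) : ℝ :=
  p (τ (nxt N v)) (τ v) * (f ((Equiv.swap v (nxt N v)).trans τ) - f τ) ^ 2

lemma coef_swap {a b x : ℝ} (ha : a ≠ 0) (hb : b ≠ 0) :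
    (a / b) * ((1 / a) * x) = (1 / b) * x := by
  field_simp

lemma Rin_bound (hp : ∀ i j, 0 < p i j) {m χ : ℕ} (B : Fin m → Finset (Fin N))
    (f : Equiv.Perm (Fin N) → ℝ) (τ : Equiv.Perm (Fin N)) (hN : 0 < N)
    (hS : (N : ℝ) ≤ ∑ j : Fin m, ((B j).card : ℝ))
    (hχ : ∀ v : Fin N, (Finset.univ.filter fun i : Fin m => v ∈ B i).card ≤ χ) :
    ∑ i : Fin m, (((B i).card : ℝ) / ∑ j : Fin m, ((B j).card : ℝ)) * Rin N p (B i) f τ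
      ≤ (χ : ℝ) * ∑ v : Fin N, (1 / (N : ℝ)) * p (τ (nxt N v)) (τ v) *
          (f ((Equiv.swap v (nxt N v)).trans τ) - f τ) ^ 2 := by
  set S : ℝ := ∑ j : Fin m, ((B j).card : ℝ) with hSdef
  have hNR : (0 : ℝ) < (N : ℝ) := by exact_mod_cast hN
  have hS0 : 0 < S := lt_of_lt_of_le hNR hS
  have htE : ∀ v, 0 ≤ tE N p f τ v := fun v => mul_nonneg (hp _ _).le (sq_nonneg _)
  have h1 : ∑ i : Fin m, (((B i).card : ℝ) / S) * Rin N p (B i) f τ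
      = ∑ i : Fin m, ∑ v ∈ Finset.univ.filter
          (fun v : Fin N => v ∈ B i ∧ nxt N v ∈ B i ∧ nxt N v ≠ v),
            (1 / S) * tE N p f τ v := by
    refine Finset.sum_congr rfl fun i _ => ?_
    rw [Rin, Finset.mul_sum]
    refine Finset.sum_congr rfl fun v hv => ?_
    have hvB : v ∈ B i := (Finset.mem_filter.1 hv).2.1
    have hc : (0:ℝ) < ((B i).card : ℝ) := by
      exact_mod_cast Finset.card_pos.2 ⟨v, hvB⟩
    rw [show (1 / ((B i).card : ℝ)) * p (τ (nxt N v)) (τ v) *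
        (f ((Equiv.swap v (nxt N v)).trans τ) - f τ) ^ 2
          = (1 / ((B i).card : ℝ)) * tE N p f τ v from by rw [tE]; ring]
    exact coef_swap hc.ne' hS0.ne'
  have h2 : ∑ i : Fin m, ∑ v ∈ Finset.univ.filter
        (fun v : Fin N => v ∈ B i ∧ nxt N v ∈ B i ∧ nxt N v ≠ v),
          (1 / S) * tE N p f τ v
      = ∑ v : Fin N, ((Finset.univ.filter
          (fun i : Fin m => v ∈ B i ∧ nxt N v ∈ B i ∧ nxt N v ≠ v)).card : ℝ)
            * ((1 / S) * tE N p f τ v) := by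
    rw [Finset.sum_congr rfl fun i (_ : i ∈ Finset.univ) => Finset.sum_filter
      (fun v : Fin N => v ∈ B i ∧ nxt N v ∈ B i ∧ nxt N v ≠ v)
      (fun v => (1 / S) * tE N p f τ v), Finset.sum_comm]
    refine Finset.sum_congr rfl fun v _ => ?_
    rw [← Finset.sum_filter, Finset.sum_const, nsmul_eq_mul]
  rw [h1, h2]
  have h3 : ∀ v : Fin N, ((Finset.univ.filter
      (fun i : Fin m => v ∈ B i ∧ nxt N v ∈ B i ∧ nxt N v ≠ v)).card : ℝ)
        * ((1 / S) * tE N p f τ v) ≤ (χ : ℝ) * ((1 / (N : ℝ)) * tE N p f τ v) := by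
    intro v
    have hsub : (Finset.univ.filter
        (fun i : Fin m => v ∈ B i ∧ nxt N v ∈ B i ∧ nxt N v ≠ v))
          ⊆ Finset.univ.filter (fun i : Fin m => v ∈ B i) :=
      Finset.monotone_filter_right _ (fun i _ h => h.1)
    have hcv : ((Finset.univ.filter
        (fun i : Fin m => v ∈ B i ∧ nxt N v ∈ B i ∧ nxt N v ≠ v)).card : ℝ)
          ≤ (χ : ℝ) := by
      exact_mod_cast (Finset.card_le_card hsub).trans (hχ v)
    have h4 : ((Finset.univ.filter
        (fun i : Fin m => v ∈ B i ∧ nxt N v ∈ B i ∧ nxt N v ≠ v)).card : ℝ) * (1 / S)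
          ≤ (χ : ℝ) * (1 / (N : ℝ)) :=
      mul_le_mul hcv (one_div_le_one_div_of_le hNR hS) (one_div_nonneg.2 hS0.le)
        (Nat.cast_nonneg χ)
    calc ((Finset.univ.filter
        (fun i : Fin m => v ∈ B i ∧ nxt N v ∈ B i ∧ nxt N v ≠ v)).card : ℝ)
          * ((1 / S) * tE N p f τ v)
        = (((Finset.univ.filter
            (fun i : Fin m => v ∈ B i ∧ nxt N v ∈ B i ∧ nxt N v ≠ v)).card : ℝ)
              * (1 / S)) * tE N p f τ v := by ring
      _ ≤ ((χ : ℝ) * (1 / (N : ℝ))) * tE N p f τ v :=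
          mul_le_mul_of_nonneg_right h4 (htE v)
      _ = (χ : ℝ) * ((1 / (N : ℝ)) * tE N p f τ v) := by ring
  calc ∑ v : Fin N, ((Finset.univ.filter
        (fun i : Fin m => v ∈ B i ∧ nxt N v ∈ B i ∧ nxt N v ≠ v)).card : ℝ)
          * ((1 / S) * tE N p f τ v)
      ≤ ∑ v : Fin N, (χ : ℝ) * ((1 / (N : ℝ)) * tE N p f τ v) :=
        Finset.sum_le_sum fun v _ => h3 v
    _ = (χ : ℝ) * ∑ v : Fin N, (1 / (N : ℝ)) * p (τ (nxt N v)) (τ v) *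
          (f ((Equiv.swap v (nxt N v)).trans τ) - f τ) ^ 2 := by
        rw [← Finset.mul_sum]
        refine congrArg _ (Finset.sum_congr rfl fun v _ => ?_)
        rw [tE]
        ring

end Aux
/-- block dynamics decomposition of the spectral gap.  If the blocks
cover all edges of `[N]`, `χ` is the maximal number of blocks covering a position,
`γB` lower-bounds the gap of the block dynamics and `γloc` lower-bounds the gap of
the restricted chain on every block with every boundary condition (each expressed by
the Poincaré inequality `γ · Var ≤ E`), then
`gap(P) ≥ χ⁻¹ · gap(P_B) · min_{i,η} gap(P restricted to B_i with boundary η)`. -/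
theorem stmt14 (N m : ℕ) (p : Fin N → Fin N → ℝ)
    (hpos : ∀ i j : Fin N, 0 < p i j)
    (B : Fin m → Finset (Fin N))
    (hcover : ∀ v : Fin N, nxt N v ≠ v → ∃ i : Fin m, v ∈ B i ∧ nxt N v ∈ B i)
    (χ : ℕ)
    (hχ : χ = Finset.univ.sup fun j : Fin N =>
      (Finset.univ.filter fun i : Fin m => j ∈ B i).card)
    (γB γloc : ℝ) (hγB : 0 ≤ γB) (hγloc : 0 ≤ γloc)
    (hblock : ∀ f : Equiv.Perm (Fin N) → ℝ,
      γB * varMu N p f ≤ dirichletBlock N m p B f)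
    (hrest : ∀ (i : Fin m) (η : Equiv.Perm (Fin N)) (f : Equiv.Perm (Fin N) → ℝ),
      γloc * condVar N p (B i) η f ≤ dirichletRestricted N p (B i) η f) :
    ∀ f : Equiv.Perm (Fin N) → ℝ,
      (χ : ℝ)⁻¹ * γB * γloc * varMu N p f ≤ dirichletSingle N p f := by
  intro f
  by_cases hN2 : 2 ≤ N
  · -- main case
    have hcov : ∀ v : Fin N, ∃ i : Fin m, v ∈ B i := covered hcover hN2
    have hSnat : N ≤ ∑ i : Fin m, (B i).card := S_ge hcov
    have hS : (N : ℝ) ≤ ∑ j : Fin m, ((B j).card : ℝ) := by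
      exact_mod_cast Nat.cast_le.2 hSnat
    have hχv : ∀ v : Fin N, (Finset.univ.filter fun i : Fin m => v ∈ B i).card ≤ χ := by
      intro v; rw [hχ]
      exact Finset.le_sup (f := fun j : Fin N =>
        (Finset.univ.filter fun i : Fin m => j ∈ B i).card) (Finset.mem_univ v)
    have hN0 : 0 < N := by omega
    have hχ1 : 1 ≤ χ := by
      have hv0 : (0 : ℕ) < N := hN0
      obtain ⟨i, hi⟩ := hcov ⟨0, hv0⟩
      calc 1 ≤ (Finset.univ.filter fun i' : Fin m => (⟨0, hv0⟩ : Fin N) ∈ B i').card :=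
            Finset.card_pos.2 ⟨i, Finset.mem_filter.2 ⟨Finset.mem_univ _, hi⟩⟩
        _ ≤ χ := hχv ⟨0, hv0⟩
    have hχR : (0 : ℝ) < (χ : ℝ) := by exact_mod_cast hχ1
    have key : γloc * (γB * varMu N p f) ≤ (χ : ℝ) * dirichletSingle N p f := by
      calc γloc * (γB * varMu N p f)
          ≤ γloc * dirichletBlock N m p B f :=
            mul_le_mul_of_nonneg_left (hblock f) hγloc
        _ = ∑ i : Fin m, (((B i).card : ℝ) / ∑ j : Fin m, ((B j).card : ℝ)) *
              ∑ σ : Equiv.Perm (Fin N), muN N p σ * (γloc * condVar N p (B i) σ f) := by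
            rw [Eblock_eq hpos B f, Finset.mul_sum]
            refine Finset.sum_congr rfl fun i _ => ?_
            calc γloc * ((((B i).card : ℝ) / ∑ j : Fin m, ((B j).card : ℝ)) *
                    ∑ σ : Equiv.Perm (Fin N), muN N p σ * condVar N p (B i) σ f)
                = (((B i).card : ℝ) / ∑ j : Fin m, ((B j).card : ℝ)) *
                    (γloc * ∑ σ : Equiv.Perm (Fin N), muN N p σ * condVar N p (B i) σ f) := by
                  ring
              _ = (((B i).card : ℝ) / ∑ j : Fin m, ((B j).card : ℝ)) *
                    ∑ σ : Equiv.Perm (Fin N), γloc * (muN N p σ * condVar N p (B i) σ f) := by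
                  rw [Finset.mul_sum]
              _ = (((B i).card : ℝ) / ∑ j : Fin m, ((B j).card : ℝ)) *
                    ∑ σ : Equiv.Perm (Fin N), muN N p σ * (γloc * condVar N p (B i) σ f) :=
                  congrArg _ (Finset.sum_congr rfl fun σ _ => by ring)
        _ ≤ ∑ i : Fin m, (((B i).card : ℝ) / ∑ j : Fin m, ((B j).card : ℝ)) *
              ∑ σ : Equiv.Perm (Fin N), muN N p σ * dirichletRestricted N p (B i) σ f := by
            refine Finset.sum_le_sum fun i _ => ?_
            refine mul_le_mul_of_nonneg_left (Finset.sum_le_sum fun σ _ =>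
              mul_le_mul_of_nonneg_left (hrest i σ f) (muN_pos hpos σ).le) ?_
            exact div_nonneg (Nat.cast_nonneg _)
              (le_trans (Nat.cast_nonneg N) hS)
        _ = ∑ i : Fin m, ∑ τ : Equiv.Perm (Fin N),
              (1 / 2) * (muN N p τ * ((((B i).card : ℝ) / ∑ j : Fin m, ((B j).card : ℝ)) *
                Rin N p (B i) f τ)) := by
            refine Finset.sum_congr rfl fun i _ => ?_
            rw [Erest_sum hpos (B i) f, Finset.mul_sum, Finset.mul_sum]
            exact Finset.sum_congr rfl fun τ _ => by ring
        _ = ∑ τ : Equiv.Perm (Fin N), ∑ i : Fin m,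
              (1 / 2) * (muN N p τ * ((((B i).card : ℝ) / ∑ j : Fin m, ((B j).card : ℝ)) *
                Rin N p (B i) f τ)) := Finset.sum_comm
        _ = (1 / 2) * ∑ τ : Equiv.Perm (Fin N), muN N p τ *
              ∑ i : Fin m, (((B i).card : ℝ) / ∑ j : Fin m, ((B j).card : ℝ)) *
                Rin N p (B i) f τ := by
            rw [Finset.mul_sum]
            refine Finset.sum_congr rfl fun τ _ => ?_
            rw [Finset.mul_sum, Finset.mul_sum]
        _ ≤ (1 / 2) * ∑ τ : Equiv.Perm (Fin N), muN N p τ *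
              ((χ : ℝ) * ∑ v : Fin N, (1 / (N : ℝ)) * p (τ (nxt N v)) (τ v) *
                (f ((Equiv.swap v (nxt N v)).trans τ) - f τ) ^ 2) := by
            refine mul_le_mul_of_nonneg_left (Finset.sum_le_sum fun τ _ =>
              mul_le_mul_of_nonneg_left (Rin_bound hpos B f τ hN0 hS hχv)
                (muN_pos hpos τ).le) (by norm_num)
        _ = (χ : ℝ) * dirichletSingle N p f := by
            rw [show ∑ τ : Equiv.Perm (Fin N), muN N p τ *
                ((χ : ℝ) * ∑ v : Fin N, (1 / (N : ℝ)) * p (τ (nxt N v)) (τ v) *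
                  (f ((Equiv.swap v (nxt N v)).trans τ) - f τ) ^ 2)
                = ∑ τ : Equiv.Perm (Fin N), (χ : ℝ) * (muN N p τ *
                    ∑ v : Fin N, (1 / (N : ℝ)) * p (τ (nxt N v)) (τ v) *
                      (f ((Equiv.swap v (nxt N v)).trans τ) - f τ) ^ 2) from
              Finset.sum_congr rfl fun τ _ => by ring, ← Finset.mul_sum, dirichletSingle]
            ring
    calc (χ : ℝ)⁻¹ * γB * γloc * varMu N p f
        = (χ : ℝ)⁻¹ * (γloc * (γB * varMu N p f)) := by ring
      _ ≤ (χ : ℝ)⁻¹ * ((χ : ℝ) * dirichletSingle N p f) :=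
          mul_le_mul_of_nonneg_left key (inv_nonneg.2 hχR.le)
      _ = dirichletSingle N p f := by
          rw [← mul_assoc, inv_mul_cancel₀ hχR.ne', one_mul]
  · -- degenerate case `N ≤ 1`: the variance vanishes
    haveI hsub : Subsingleton (Fin N) := ⟨fun a b => by
      have ha := a.isLt; have hb := b.isLt; exact Fin.ext (by omega)⟩
    haveI : Subsingleton (Equiv.Perm (Fin N)) :=
      ⟨fun σ τ => Equiv.ext fun x => Subsingleton.elim _ _⟩
    have hone : muN N p 1 = 1 := by
      rw [muN, Fintype.sum_subsingleton (fun τ : Equiv.Perm (Fin N) => pairWeight N p τ) 1]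
      exact div_self (pairWeight_pos hpos 1).ne'
    have hvar : varMu N p f = 0 := by
      rw [varMu, Fintype.sum_subsingleton
        (fun σ : Equiv.Perm (Fin N) =>
          muN N p σ * (f σ - ∑ τ : Equiv.Perm (Fin N), muN N p τ * f τ) ^ 2) 1,
        Fintype.sum_subsingleton (fun τ : Equiv.Perm (Fin N) => muN N p τ * f τ) 1,
        hone]
      ring
    rw [hvar, mul_zero]
    exact Esingle_nonneg hpos f

end
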